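/- If A_1, …, A_n is a semiorthogonal sequence of admissible subcategories of a triangulated category T (i.e. Hom_T(A_i, A_j) = 0 for i > j and each A_i is admissible), then the subcategory ⟨A_1, …, A_n⟩ is admissible and the mutation functors satisfy R_{⟨A_1, …, A_n⟩} = R_{A_n} ∘ … ∘ R_{A_1} and L_{⟨A_1, …, A_n⟩} = L_{A_1} ∘ … ∘ L_{A_n}. -/

import Mathlib

namespace HPD

open CategoryTheory Limits Pretriangulated

universe v u

variable {C : Type u} [Category.{v} C]

section Preadd
variable [Preadditive C]

/-- The right orthogonal to a set of objects. -/
def rightOrth (A : Set C) : Set C := {T : C | ∀ a ∈ A, ∀ f : a ⟶ T, f = 0}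

/-- The left orthogonal to a set of objects. -/
def leftOrth (A : Set C) : Set C := {T : C | ∀ a ∈ A, ∀ f : T ⟶ a, f = 0}

end Preadd

/-- The inclusion functor of the full subcategory on a set of objects. -/
abbrev incl (A : Set C) : ObjectProperty.FullSubcategory (fun X : C => X ∈ A) ⥤ C :=
  ObjectProperty.ι (P := _)

/-- A full subcategory is right admissible if its inclusion functor admits a right adjoint. -/
def RightAdmissible (A : Set C) : Prop := (incl A).IsLeftAdjoint

/-- A full subcategory is left admissible if its inclusion functor admits a left adjoint. -/
def LeftAdmissible (A : Set C) : Prop := (incl A).IsRightAdjoint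

/-- A full subcategory is admissible if it is both left and right admissible. -/
def Admissible (A : Set C) : Prop := RightAdmissible A ∧ LeftAdmissible A

section Triang

variable [HasZeroObject C] [Preadditive C] [HasShift C ℤ]
  [∀ n : ℤ, (shiftFunctor C n).Additive] [Pretriangulated C]

/-- A set of objects is a (strictly full) triangulated subcategory. -/
structure IsTriangulatedSub (A : Set C) : Prop where
  zero : ∀ X : C, IsZero X → X ∈ A
  isoClosed : ∀ ⦃X Y : C⦄, (X ≅ Y) → X ∈ A → Y ∈ A
  shift : ∀ (X : C) (n : ℤ), X ∈ A → X⟦n⟧ ∈ A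
  ext₂ : ∀ T : Triangle C, T ∈ (distTriang C) → T.obj₁ ∈ A → T.obj₃ ∈ A → T.obj₂ ∈ A

/-- The minimal strictly full triangulated subcategory containing a set of objects. -/
def triangulatedClosure (S : Set C) : Set C :=
  {X : C | ∀ A : Set C, IsTriangulatedSub A → S ⊆ A → X ∈ A}

/-- A family is semiorthogonal if there are no nonzero morphisms from objects of a later
subcategory to objects of an earlier one. -/
def IsSemiorthogonal {n : ℕ} (A : Fin n → Set C) : Prop :=
  ∀ ⦃i j : Fin n⦄, j < i → ∀ a ∈ A i, ∀ b ∈ A j, ∀ f : a ⟶ b, f = 0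

/-- `IsSODOn S A` : the family `A` is a semiorthogonal decomposition of the (strictly full
triangulated) subcategory with objects `S`; every object of `S` admits a filtration
`0 = T_n → ... → T_1 → T_0 = T` whose `k`-th cone lies in `A k`. -/
structure IsSODOn {n : ℕ} (S : Set C) (A : Fin n → Set C) : Prop where
  subset : ∀ i, A i ⊆ S
  semiorthogonal : IsSemiorthogonal A
  filtration : ∀ T ∈ S, ∃ (F : Fin (n+1) → C) (f : ∀ k : Fin n, F k.succ ⟶ F k.castSucc),
    F 0 = T ∧ IsZero (F (Fin.last n)) ∧
    ∀ k : Fin n, ∃ (Q : C) (g : F k.castSucc ⟶ Q) (h : Q ⟶ (F k.succ)⟦(1 : ℤ)⟧),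
      Q ∈ A k ∧ Triangle.mk (f k) g h ∈ distTriang C

end Triang

end HPD
namespace HPD
open CategoryTheory Limits Pretriangulated

/-- The composition `F 0 ⋙ F 1 ⋙ ⋯ ⋙ F (n-1)` of a finite family of endofunctors
(so that `F 0` is applied first). -/
def composeAll {C : Type u} [Category.{v} C] {n : ℕ} (F : Fin n → (C ⥤ C)) : C ⥤ C :=
  (List.ofFn F).foldr (· ⋙ ·) (𝟭 C)

/-!
For the right mutation `R_i` through `A_i`, the counit `R_i T ⟶ T` is the universal map from
`⊥A_i` to `T`, and its cone lies in `(⊥A_i)^⊥ = A_i`. Semiorthogonality makes `R_j` preserve `⊥A_i` for `i < j`, so the composite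
`R_{n-1} ∘ ⋯ ∘ R_0` carries a counit that is universal from `⋂ ⊥A_i = ⊥⟨A_1, …, A_n⟩`; uniqueness
of adjoints identifies it with the right mutation through `⟨A_1, …, A_n⟩`. The composite changes
an object only by extensions by objects of the `A_i`, and it kills every object of
`(⊥⟨A_1, …, A_n⟩)^⊥`; hence `(⊥⟨A_1, …, A_n⟩)^⊥ = ⟨A_1, …, A_n⟩`, which is left admissible since
`⊥⟨A_1, …, A_n⟩` is right admissible. Left mutations are dual.
-/

section Category

variable {C : Type u} [Category.{v} C]

lemma composeAll_succ {n : ℕ} (F : Fin (n + 1) → (C ⥤ C)) :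
    composeAll F = F 0 ⋙ composeAll (fun i => F i.succ) := by
  rw [composeAll, List.ofFn_succ, List.foldr_cons, composeAll]

lemma composeAll_obj_mem {n : ℕ} (F : Fin n → (C ⥤ C)) {D : Set C}
    (hF : ∀ i, ∀ X ∈ D, (F i).obj X ∈ D) {X : C} (hX : X ∈ D) : (composeAll F).obj X ∈ D := by
  induction n generalizing X with
  | zero => exact hX
  | succ n ih =>
    rw [composeAll_succ]
    exact ih _ (fun i => hF i.succ) (hF 0 X hX)

lemma mem_of_composeAll_obj_mem {n : ℕ} (F : Fin n → (C ⥤ C)) {D : Set C}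
    (hF : ∀ i X, (F i).obj X ∈ D → X ∈ D) {X : C} (hX : (composeAll F).obj X ∈ D) : X ∈ D := by
  induction n generalizing X with
  | zero => exact hX
  | succ n ih =>
    rw [composeAll_succ] at hX
    exact hF 0 X (ih _ (fun i => hF i.succ) hX)

structure IsCoreflection (S : Set C) {X T : C} (u : X ⟶ T) : Prop where
  mem : X ∈ S
  bijective : ∀ x ∈ S, Function.Bijective (fun g : x ⟶ X => g ≫ u)

structure IsReflection (S : Set C) {T X : C} (u : T ⟶ X) : Prop where
  mem : X ∈ S
  bijective : ∀ x ∈ S, Function.Bijective (fun g : X ⟶ x => u ≫ g)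

variable {S S' : Set C}

lemma IsCoreflection.id {T : C} (hT : T ∈ S) : IsCoreflection S (𝟙 T) :=
  ⟨hT, fun _ _ => by
    simp only [Category.comp_id]
    exact Function.bijective_id⟩

lemma IsReflection.id {T : C} (hT : T ∈ S) : IsReflection S (𝟙 T) :=
  ⟨hT, fun _ _ => by
    simp only [Category.id_comp]
    exact Function.bijective_id⟩

lemma IsCoreflection.comp {X' X T : C} {u' : X' ⟶ X} {u : X ⟶ T} (h : IsCoreflection S u)
    (h' : IsCoreflection S' u') (hX' : X' ∈ S) : IsCoreflection (S ∩ S') (u' ≫ u) := by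
  refine ⟨⟨hX', h'.mem⟩, fun x hx => ?_⟩
  simpa [Function.comp_def] using (h.bijective x hx.1).comp (h'.bijective x hx.2)

lemma IsReflection.comp {T X X' : C} {u : T ⟶ X} {u' : X ⟶ X'} (h : IsReflection S u)
    (h' : IsReflection S' u') (hX' : X' ∈ S) : IsReflection (S ∩ S') (u ≫ u') := by
  refine ⟨⟨hX', h'.mem⟩, fun x hx => ?_⟩
  simpa [Function.comp_def] using (h.bijective x hx.1).comp (h'.bijective x hx.2)

lemma isCoreflection_counit {R : C ⥤ ObjectProperty.FullSubcategory (fun X : C => X ∈ S)}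
    (adj : incl S ⊣ R) (T : C) : IsCoreflection S (adj.counit.app T) := by
  refine ⟨(R.obj T).property, fun x hx => ?_⟩
  have h (g : x ⟶ (R.obj T).obj) :
      (adj.homEquiv ⟨x, hx⟩ T).symm (ObjectProperty.homMk g) = g ≫ adj.counit.app T := by
    rw [Adjunction.homEquiv_counit]
    rfl
  refine ⟨fun g₁ g₂ hg => ?_, fun f => ⟨(adj.homEquiv ⟨x, hx⟩ T f).hom, ?_⟩⟩
  · exact congrArg (·.hom) ((adj.homEquiv _ _).symm.injective ((h g₁).trans (hg.trans (h g₂).symm)))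
  · exact (h _).symm.trans ((adj.homEquiv ⟨x, hx⟩ T).symm_apply_apply f)

lemma isReflection_unit {L : C ⥤ ObjectProperty.FullSubcategory (fun X : C => X ∈ S)}
    (adj : L ⊣ incl S) (T : C) : IsReflection S (adj.unit.app T) := by
  refine ⟨(L.obj T).property, fun x hx => ?_⟩
  have h (g : (L.obj T).obj ⟶ x) :
      adj.homEquiv T ⟨x, hx⟩ (ObjectProperty.homMk g) = adj.unit.app T ≫ g := by
    rw [Adjunction.homEquiv_unit]
    rfl
  refine ⟨fun g₁ g₂ hg => ?_, fun f => ⟨((adj.homEquiv T ⟨x, hx⟩).symm f).hom, ?_⟩⟩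
  · exact congrArg (·.hom) ((adj.homEquiv _ _).injective ((h g₁).trans (hg.trans (h g₂).symm)))
  · exact (h _).symm.trans ((adj.homEquiv T ⟨x, hx⟩).apply_symm_apply f)

lemma exists_isCoreflection_composeAll {n : ℕ} (F : Fin n → (C ⥤ C)) (S : Fin n → Set C)
    (ε : ∀ i, F i ⟶ 𝟭 C) (hε : ∀ i T, IsCoreflection (S i) ((ε i).app T))
    (hF : ∀ ⦃i j⦄, i < j → ∀ X ∈ S i, (F j).obj X ∈ S i) :
    ∃ ε' : composeAll F ⟶ 𝟭 C, ∀ T, IsCoreflection (⋂ i, S i) (ε'.app T) := by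
  induction n with
  | zero =>
    refine ⟨𝟙 _, fun T => ?_⟩
    rw [Set.iInter_of_empty]
    exact IsCoreflection.id (Set.mem_univ T)
  | succ n ih =>
    obtain ⟨ε', hε'⟩ := ih (fun i : Fin n => F i.succ) (fun i => S i.succ) (fun i => ε i.succ)
      (fun i => hε i.succ) (fun _ _ hij => hF (Fin.succ_lt_succ_iff.2 hij))
    have hS : ⋂ i, S i = S 0 ∩ ⋂ i : Fin n, S i.succ := by
      ext
      simp [Fin.forall_fin_succ]
    rw [composeAll_succ, hS]
    refine ⟨Functor.whiskerLeft (F 0) ε' ≫ (F 0).rightUnitor.hom ≫ ε 0, fun T => ?_⟩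
    simpa using (hε 0 T).comp (hε' ((F 0).obj T))
      (composeAll_obj_mem _ (fun j X hX => hF (Fin.succ_pos j) X hX) (hε 0 T).mem)

lemma exists_isReflection_composeAll {n : ℕ} (F : Fin n → (C ⥤ C)) (S : Fin n → Set C)
    (η : ∀ i, 𝟭 C ⟶ F i) (hη : ∀ i T, IsReflection (S i) ((η i).app T))
    (hF : ∀ ⦃i j⦄, i < j → ∀ X ∈ S i, (F j).obj X ∈ S i) :
    ∃ η' : 𝟭 C ⟶ composeAll F, ∀ T, IsReflection (⋂ i, S i) (η'.app T) := by
  induction n with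
  | zero =>
    refine ⟨𝟙 _, fun T => ?_⟩
    rw [Set.iInter_of_empty]
    exact IsReflection.id (Set.mem_univ T)
  | succ n ih =>
    obtain ⟨η', hη'⟩ := ih (fun i : Fin n => F i.succ) (fun i => S i.succ) (fun i => η i.succ)
      (fun i => hη i.succ) (fun _ _ hij => hF (Fin.succ_lt_succ_iff.2 hij))
    have hS : ⋂ i, S i = S 0 ∩ ⋂ i : Fin n, S i.succ := by
      ext
      simp [Fin.forall_fin_succ]
    rw [composeAll_succ, hS]
    refine ⟨η 0 ≫ (F 0).rightUnitor.inv ≫ Functor.whiskerLeft (F 0) η', fun T => ?_⟩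
    simpa using (hη 0 T).comp (hη' ((F 0).obj T))
      (composeAll_obj_mem _ (fun j X hX => hF (Fin.succ_pos j) X hX) (hη 0 T).mem)

lemma rightAdmissible_of_isCoreflection (h : ∀ T : C, ∃ (X : C) (u : X ⟶ T), IsCoreflection S u) :
    RightAdmissible S := by
  refine Functor.isLeftAdjoint_of_rightAdjointObjIsDefined_eq_top (funext fun T => ?_)
  obtain ⟨X, u, hu⟩ := h T
  refine eq_true (Functor.RepresentableBy.isRepresentable (Y := ⟨X, hu.mem⟩)
    { homEquiv := fun {Y} => (ObjectProperty.fullyFaithfulι _).homEquiv.trans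
        (Equiv.ofBijective _ (hu.bijective Y.obj Y.property))
      homEquiv_comp := fun f g => Category.assoc f.hom g.hom u })

lemma leftAdmissible_of_isReflection (h : ∀ T : C, ∃ (X : C) (u : T ⟶ X), IsReflection S u) :
    LeftAdmissible S := by
  refine Functor.isRightAdjoint_of_leftAdjointObjIsDefined_eq_top (funext fun T => ?_)
  obtain ⟨X, u, hu⟩ := h T
  refine eq_true (Functor.CorepresentableBy.isCorepresentable (X := ⟨X, hu.mem⟩)
    { homEquiv := fun {Y} => (ObjectProperty.fullyFaithfulι _).homEquiv.trans
        (Equiv.ofBijective _ (hu.bijective Y.obj Y.property))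
      homEquiv_comp := fun f g => (Category.assoc u g.hom f.hom).symm })

noncomputable def adjunctionOfIsCoreflection {K : C ⥤ C} (ε : K ⟶ 𝟭 C)
    (hε : ∀ T, IsCoreflection S (ε.app T)) :
    incl S ⊣ ObjectProperty.lift (fun X : C => X ∈ S) K (fun T => (hε T).mem) :=
  Adjunction.mkOfHomEquiv
    { homEquiv := fun X T => (Equiv.ofBijective _ ((hε T).bijective X.obj X.property)).symm.trans
        ((ObjectProperty.fullyFaithfulι (fun X : C => X ∈ S)).homEquiv (X := X)
          (Y := ⟨K.obj T, (hε T).mem⟩)).symm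
      homEquiv_naturality_left_symm := fun f g => by
        simp only [Equiv.symm_trans_apply, Equiv.symm_symm, Equiv.ofBijective_apply]
        exact Category.assoc f.hom g.hom _
      homEquiv_naturality_right := fun {X Y Y'} f g => by
        rw [← Equiv.eq_symm_apply]
        obtain ⟨a, rfl⟩ := ((hε Y).bijective X.obj X.property).surjective f
        simp only [Equiv.trans_apply, Equiv.ofBijective_symm_apply_apply, Equiv.symm_trans_apply,
          Equiv.symm_symm, Equiv.ofBijective_apply]
        have hg : K.map g ≫ ε.app Y' = ε.app Y ≫ g := ε.naturality g
        rw [Category.assoc, ← hg, ← Category.assoc]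
        rfl }

noncomputable def adjunctionOfIsReflection {K : C ⥤ C} (η : 𝟭 C ⟶ K)
    (hη : ∀ T, IsReflection S (η.app T)) :
    ObjectProperty.lift (fun X : C => X ∈ S) K (fun T => (hη T).mem) ⊣ incl S :=
  Adjunction.mkOfHomEquiv
    { homEquiv := fun T X => ((ObjectProperty.fullyFaithfulι (fun X : C => X ∈ S)).homEquiv
          (X := ⟨K.obj T, (hη T).mem⟩) (Y := X)).trans
        (Equiv.ofBijective _ ((hη T).bijective X.obj X.property))
      homEquiv_naturality_left_symm := fun {T' T X} f g => by
        rw [Equiv.symm_apply_eq]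
        obtain ⟨b, rfl⟩ := ((hη T).bijective X.obj X.property).surjective g
        simp only [Equiv.symm_trans_apply, Equiv.ofBijective_symm_apply_apply, Equiv.trans_apply,
          Equiv.ofBijective_apply]
        have hf : f ≫ η.app T = η.app T' ≫ K.map f := η.naturality f
        rw [← Category.assoc, hf, Category.assoc]
        rfl
      homEquiv_naturality_right := fun f g => by
        simp only [Equiv.trans_apply, Equiv.ofBijective_apply]
        exact (Category.assoc _ f.hom g.hom).symm }

noncomputable def isoOfIsCoreflection
    {R : C ⥤ ObjectProperty.FullSubcategory (fun X : C => X ∈ S)} (adj : incl S ⊣ R)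
    {K : C ⥤ C} (ε : K ⟶ 𝟭 C) (hε : ∀ T, IsCoreflection S (ε.app T)) : R ⋙ incl S ≅ K :=
  Functor.isoWhiskerRight (adj.rightAdjointUniq (adjunctionOfIsCoreflection ε hε)) (incl S) ≪≫
    ObjectProperty.liftCompιIso _ _ _

noncomputable def isoOfIsReflection
    {L : C ⥤ ObjectProperty.FullSubcategory (fun X : C => X ∈ S)} (adj : L ⊣ incl S)
    {K : C ⥤ C} (η : 𝟭 C ⟶ K) (hη : ∀ T, IsReflection S (η.app T)) : L ⋙ incl S ≅ K :=
  Functor.isoWhiskerRight (adj.leftAdjointUniq (adjunctionOfIsReflection η hη)) (incl S) ≪≫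
    ObjectProperty.liftCompιIso _ _ _

end Category

section Preadditive

variable {C : Type u} [Category.{v} C] [Preadditive C] {S S' : Set C}

lemma subset_rightOrth_leftOrth (S : Set C) : S ⊆ rightOrth (leftOrth S) :=
  fun _ hx _ ha f => ha _ hx f

lemma subset_leftOrth_rightOrth (S : Set C) : S ⊆ leftOrth (rightOrth S) :=
  fun _ hx _ ha f => ha _ hx f

lemma leftOrth_anti (h : S ⊆ S') : leftOrth S' ⊆ leftOrth S :=
  fun _ hx a ha f => hx a (h ha) f

lemma rightOrth_anti (h : S ⊆ S') : rightOrth S' ⊆ rightOrth S :=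
  fun _ hx a ha f => hx a (h ha) f

lemma leftOrth_iUnion {ι : Type*} (A : ι → Set C) : leftOrth (⋃ i, A i) = ⋂ i, leftOrth (A i) := by
  ext x
  simp only [leftOrth, Set.mem_iUnion, Set.mem_iInter, Set.mem_ofPred_eq]
  exact ⟨fun h i a ha => h a ⟨i, ha⟩, fun h a ⟨i, ha⟩ => h i a ha⟩

lemma rightOrth_iUnion {ι : Type*} (A : ι → Set C) :
    rightOrth (⋃ i, A i) = ⋂ i, rightOrth (A i) := by
  ext x
  simp only [rightOrth, Set.mem_iUnion, Set.mem_iInter, Set.mem_ofPred_eq]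
  exact ⟨fun h i a ha => h a ⟨i, ha⟩, fun h a ⟨i, ha⟩ => h i a ha⟩

lemma IsCoreflection.isZero {X T : C} {u : X ⟶ T} (h : IsCoreflection S u) (hu : u = 0) :
    IsZero X :=
  (IsZero.iff_id_eq_zero X).2 ((h.bijective X h.mem).injective (by simp [hu]))

lemma IsReflection.isZero {T X : C} {u : T ⟶ X} (h : IsReflection S u) (hu : u = 0) :
    IsZero X :=
  (IsZero.iff_id_eq_zero X).2 ((h.bijective X h.mem).injective (by simp [hu]))

end Preadditive

section Shift

variable {C : Type u} [Category.{v} C] [HasShift C ℤ] {B : Set C}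

def IsShiftClosed (B : Set C) : Prop := ∀ b ∈ B, ∀ n : ℤ, b⟦n⟧ ∈ B

lemma isShiftClosed_iUnion {ι : Type*} {A : ι → Set C} (hA : ∀ i, IsShiftClosed (A i)) :
    IsShiftClosed (⋃ i, A i) := by
  simp only [IsShiftClosed, Set.mem_iUnion]
  exact fun b ⟨i, hb⟩ n => ⟨i, hA i b hb n⟩

lemma IsCoreflection.shift (hB : IsShiftClosed B) {X T : C} {u : X ⟶ T}
    (h : IsCoreflection B u) (n : ℤ) : IsCoreflection B (u⟦n⟧') := by
  refine ⟨hB X h.mem n, fun x hx => ?_⟩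
  let e := (shiftEquiv C n).symm.toAdjunction.homEquiv x
  have he : (fun g : x ⟶ X⟦n⟧ => g ≫ u⟦n⟧') = e T ∘ (fun g => g ≫ u) ∘ (e X).symm := by
    ext g
    change _ = e T ((e X).symm g ≫ u)
    erw [Adjunction.homEquiv_naturality_right, Equiv.apply_symm_apply]
    rfl
  rw [he]
  exact (e T).bijective.comp ((h.bijective _ (hB x hx (-n))).comp (e X).symm.bijective)

lemma IsReflection.shift (hB : IsShiftClosed B) {T X : C} {u : T ⟶ X}
    (h : IsReflection B u) (n : ℤ) : IsReflection B (u⟦n⟧') := by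
  refine ⟨hB X h.mem n, fun x hx => ?_⟩
  let e := fun Y => (shiftEquiv C n).toAdjunction.homEquiv Y x
  have he : (fun g : X⟦n⟧ ⟶ x => u⟦n⟧' ≫ g) = (e T).symm ∘ (fun g => u ≫ g) ∘ e X := by
    ext g
    change _ = (e T).symm (u ≫ e X g)
    erw [← Adjunction.homEquiv_naturality_left, Equiv.symm_apply_apply]
    rfl
  rw [he]
  exact (e T).symm.bijective.comp ((h.bijective _ (hB x hx (-n))).comp (e X).bijective)

variable [Preadditive C]

lemma isShiftClosed_rightOrth (hB : IsShiftClosed B) : IsShiftClosed (rightOrth B) := by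
  have : ObjectProperty.IsStableUnderShift (· ∈ B) ℤ := ⟨fun n => ⟨fun b hb => hB b hb n⟩⟩
  intro X hX n a ha f
  exact ObjectProperty.le_shift (ObjectProperty.rightOrthogonal (· ∈ B)) n X
    (fun _ g hg => hX _ hg g) f ha

lemma isShiftClosed_leftOrth (hB : IsShiftClosed B) : IsShiftClosed (leftOrth B) := by
  have : ObjectProperty.IsStableUnderShift (· ∈ B) ℤ := ⟨fun n => ⟨fun b hb => hB b hb n⟩⟩
  intro X hX n a ha f
  exact ObjectProperty.le_shift (ObjectProperty.leftOrthogonal (· ∈ B)) n X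
    (fun _ g hg => hX _ hg g) f ha

end Shift

section Pretriangulated

variable {C : Type u} [Category.{v} C] [HasZeroObject C] [Preadditive C] [HasShift C ℤ]
  [∀ n : ℤ, (shiftFunctor C n).Additive] [Pretriangulated C] {S A B D : Set C}

lemma IsTriangulatedSub.isShiftClosed (hB : IsTriangulatedSub B) : IsShiftClosed B :=
  fun b hb n => hB.shift b n hb

lemma isTriangulatedSub_rightOrth (hB : IsShiftClosed B) : IsTriangulatedSub (rightOrth B) where
  zero X hX a _ f := hX.eq_of_tgt f 0
  isoClosed X Y e hX a ha f := by
    rw [← cancel_mono e.inv, zero_comp]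
    exact hX a ha _
  shift X n hX := isShiftClosed_rightOrth hB X hX n
  ext₂ T hT h₁ h₃ a ha f := by
    obtain ⟨g, rfl⟩ := Triangle.coyoneda_exact₂ T hT f (h₃ a ha _)
    simp [h₁ a ha g]

lemma isTriangulatedSub_leftOrth (hB : IsShiftClosed B) : IsTriangulatedSub (leftOrth B) where
  zero X hX a _ f := hX.eq_of_src f 0
  isoClosed X Y e hX a ha f := by
    rw [← cancel_epi e.hom, comp_zero]
    exact hX a ha _
  shift X n hX := isShiftClosed_leftOrth hB X hX n
  ext₂ T hT h₁ h₃ a ha f := by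
    obtain ⟨g, rfl⟩ := Triangle.yoneda_exact₂ T hT f (h₁ a ha _)
    simp [h₃ a ha g]

lemma IsTriangulatedSub.mem₁_iff_mem₂ (hD : IsTriangulatedSub D) {T : Triangle C}
    (hT : T ∈ distTriang C) (h₃ : T.obj₃ ∈ D) : T.obj₁ ∈ D ↔ T.obj₂ ∈ D :=
  ⟨fun h₁ => hD.ext₂ T hT h₁ h₃,
    fun h₂ => hD.ext₂ _ (inv_rot_of_distTriang T hT) (hD.shift _ _ h₃) h₂⟩

lemma isTriangulatedSub_triangulatedClosure (S : Set C) :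
    IsTriangulatedSub (triangulatedClosure S) where
  zero X hX _ hD _ := hD.zero X hX
  isoClosed _ _ e hX _ hD hSD := hD.isoClosed e (hX _ hD hSD)
  shift X n hX _ hD hSD := hD.shift X n (hX _ hD hSD)
  ext₂ T hT h₁ h₃ _ hD hSD := hD.ext₂ T hT (h₁ _ hD hSD) (h₃ _ hD hSD)

lemma subset_triangulatedClosure (S : Set C) : S ⊆ triangulatedClosure S :=
  fun _ hx _ _ hSD => hSD hx

lemma triangulatedClosure_subset (hD : IsTriangulatedSub D) (hSD : S ⊆ D) :
    triangulatedClosure S ⊆ D :=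
  fun _ hx => hx D hD hSD

lemma leftOrth_triangulatedClosure (hS : IsShiftClosed S) :
    leftOrth (triangulatedClosure S) = leftOrth S := by
  refine (leftOrth_anti (subset_triangulatedClosure S)).antisymm fun b hb => ?_
  refine leftOrth_anti ?_ (subset_leftOrth_rightOrth _ hb)
  exact triangulatedClosure_subset
    (isTriangulatedSub_rightOrth (isShiftClosed_leftOrth hS)) (subset_rightOrth_leftOrth S)

lemma rightOrth_triangulatedClosure (hS : IsShiftClosed S) :
    rightOrth (triangulatedClosure S) = rightOrth S := by
  refine (rightOrth_anti (subset_triangulatedClosure S)).antisymm fun b hb => ?_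
  refine rightOrth_anti ?_ (subset_rightOrth_leftOrth _ hb)
  exact triangulatedClosure_subset
    (isTriangulatedSub_leftOrth (isShiftClosed_rightOrth hS)) (subset_leftOrth_rightOrth S)

lemma IsCoreflection.obj₃_mem_rightOrth (hB : IsShiftClosed B) {T : Triangle C}
    (hT : T ∈ distTriang C) (h : IsCoreflection B T.mor₁) : T.obj₃ ∈ rightOrth B := by
  intro b hb f
  have hf : f ≫ T.mor₃ = 0 := ((h.shift hB 1).bijective b hb).injective
    (by simp [comp_distTriang_mor_zero₃₁ T hT])
  obtain ⟨g, rfl⟩ := Triangle.coyoneda_exact₃ T hT f hf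
  obtain ⟨g', rfl⟩ := (h.bijective b hb).surjective g
  simp [comp_distTriang_mor_zero₁₂ T hT]

lemma IsReflection.obj₃_mem_leftOrth (hB : IsShiftClosed B) {T : Triangle C}
    (hT : T ∈ distTriang C) (h : IsReflection B T.mor₁) : T.obj₃ ∈ leftOrth B := by
  intro b hb f
  have hf : T.mor₂ ≫ f = 0 := (h.bijective b hb).injective
    (by simp [reassoc_of% comp_distTriang_mor_zero₁₂ T hT])
  obtain ⟨g, rfl⟩ := Triangle.yoneda_exact₃ T hT f hf
  obtain ⟨g', rfl⟩ := ((h.shift hB 1).bijective b hb).surjective g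
  simp [reassoc_of% comp_distTriang_mor_zero₃₁ T hT]

lemma isCoreflection_mor₁ {T : Triangle C} (hT : T ∈ distTriang C) (h₁ : T.obj₁ ∈ S)
    (h₃ : T.obj₃ ∈ rightOrth S) (h₃' : T.obj₃⟦(-1 : ℤ)⟧ ∈ rightOrth S) :
    IsCoreflection S T.mor₁ := by
  refine ⟨h₁, fun x hx => ⟨fun g₁ g₂ hg => ?_, fun f => ?_⟩⟩
  · rw [← sub_eq_zero]
    obtain ⟨k, hk⟩ := Triangle.coyoneda_exact₂ _ (inv_rot_of_distTriang _ hT) (g₁ - g₂)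
      (show (g₁ - g₂) ≫ T.mor₁ = 0 by rw [Preadditive.sub_comp, sub_eq_zero]; exact hg)
    rw [hk, show k = 0 from h₃' x hx k]
    exact zero_comp
  · obtain ⟨g, hg⟩ := Triangle.coyoneda_exact₂ T hT f (h₃ x hx _)
    exact ⟨g, hg.symm⟩

lemma isReflection_mor₂ {T : Triangle C} (hT : T ∈ distTriang C) (h₃ : T.obj₃ ∈ S)
    (h₁ : T.obj₁ ∈ leftOrth S) (h₁' : T.obj₁⟦(1 : ℤ)⟧ ∈ leftOrth S) :
    IsReflection S T.mor₂ := by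
  refine ⟨h₃, fun x hx => ⟨fun g₁ g₂ hg => ?_, fun f => ?_⟩⟩
  · rw [← sub_eq_zero]
    obtain ⟨k, hk⟩ := Triangle.yoneda_exact₃ T hT (g₁ - g₂)
      (show T.mor₂ ≫ (g₁ - g₂) = 0 by rw [Preadditive.comp_sub, sub_eq_zero]; exact hg)
    rw [hk, show k = 0 from h₁' x hx k]
    exact comp_zero
  · obtain ⟨g, hg⟩ := Triangle.yoneda_exact₂ T hT f (h₁ x hx _)
    exact ⟨g, hg.symm⟩

lemma leftAdmissible_rightOrth (hB : IsShiftClosed B)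
    {R : C ⥤ ObjectProperty.FullSubcategory (fun X : C => X ∈ B)} (adj : incl B ⊣ R) :
    LeftAdmissible (rightOrth B) := by
  refine leftAdmissible_of_isReflection fun T => ?_
  obtain ⟨Z, v, w, hT⟩ := distinguished_cocone_triangle (adj.counit.app T)
  have hRT := (R.obj T).property
  exact ⟨Z, v, isReflection_mor₂ hT ((isCoreflection_counit adj T).obj₃_mem_rightOrth hB hT)
    (subset_leftOrth_rightOrth B hRT) (subset_leftOrth_rightOrth B (hB _ hRT 1))⟩

lemma rightAdmissible_leftOrth (hB : IsShiftClosed B)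
    {L : C ⥤ ObjectProperty.FullSubcategory (fun X : C => X ∈ B)} (adj : L ⊣ incl B) :
    RightAdmissible (leftOrth B) := by
  refine rightAdmissible_of_isCoreflection fun T => ?_
  obtain ⟨Z, v, w, hT⟩ := distinguished_cocone_triangle (adj.unit.app T)
  have hZ := (isReflection_unit adj T).obj₃_mem_leftOrth hB hT
  have hLT := (L.obj T).property
  exact ⟨_, _, isCoreflection_mor₁ (inv_rot_of_distTriang _ hT)
    (isShiftClosed_leftOrth hB Z hZ (-1)) (subset_rightOrth_leftOrth B hLT)
    (subset_rightOrth_leftOrth B (hB _ hLT (-1)))⟩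

lemma IsReflection.mem_of_mem_rightOrth_leftOrth (hA : IsTriangulatedSub A) {y X : C}
    {u : y ⟶ X} (h : IsReflection A u) (hy : y ∈ rightOrth (leftOrth A)) : y ∈ A := by
  obtain ⟨Z, v, w, hT⟩ := distinguished_cocone_triangle u
  have hZ : Z ∈ leftOrth A := h.obj₃_mem_leftOrth hA.isShiftClosed hT
  have hw : w = 0 :=
    isShiftClosed_rightOrth (isShiftClosed_leftOrth hA.isShiftClosed) y hy 1 Z hZ w
  obtain ⟨g, hg⟩ := Triangle.coyoneda_exact₃ _ hT (𝟙 Z) ((Category.id_comp _).trans hw)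
  have : IsIso u := (Triangle.isZero₃_iff_isIso₁ _ hT).1
    ((IsZero.iff_id_eq_zero Z).2 (by rw [hg, hZ X h.mem g]; exact zero_comp))
  exact hA.isoClosed (asIso u).symm h.mem

lemma IsCoreflection.mem_of_mem_leftOrth_rightOrth (hA : IsTriangulatedSub A) {X y : C}
    {u : X ⟶ y} (h : IsCoreflection A u) (hy : y ∈ leftOrth (rightOrth A)) : y ∈ A := by
  obtain ⟨Z, v, w, hT⟩ := distinguished_cocone_triangle u
  have hZ : Z ∈ rightOrth A := h.obj₃_mem_rightOrth hA.isShiftClosed hT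
  obtain ⟨g, hg⟩ := Triangle.yoneda_exact₃ _ hT (𝟙 Z) ((Category.comp_id _).trans (hy Z hZ v))
  have : IsIso u := (Triangle.isZero₃_iff_isIso₁ _ hT).1
    ((IsZero.iff_id_eq_zero Z).2 (by rw [hg, hZ _ (hA.shift X 1 h.mem) g]; exact comp_zero))
  exact hA.isoClosed (asIso u) h.mem

lemma rightOrth_leftOrth_subset (hA : IsTriangulatedSub A) (hadm : LeftAdmissible A) :
    rightOrth (leftOrth A) ⊆ A := by
  obtain ⟨P, ⟨adj⟩⟩ := hadm.exists_leftAdjoint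
  exact fun y hy => (isReflection_unit adj y).mem_of_mem_rightOrth_leftOrth hA hy

lemma leftOrth_rightOrth_subset (hA : IsTriangulatedSub A) (hadm : RightAdmissible A) :
    leftOrth (rightOrth A) ⊆ A := by
  obtain ⟨Q, ⟨adj⟩⟩ := hadm.exists_rightAdjoint
  exact fun y hy => (isCoreflection_counit adj y).mem_of_mem_leftOrth_rightOrth hA hy

lemma rightMutation_obj_mem_iff (hA : IsTriangulatedSub A) (hadm : LeftAdmissible A)
    {R : C ⥤ ObjectProperty.FullSubcategory (fun X : C => X ∈ leftOrth A)}
    (adj : incl (leftOrth A) ⊣ R) (hD : IsTriangulatedSub D) (hAD : A ⊆ D) (T : C) :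
    (R.obj T).obj ∈ D ↔ T ∈ D := by
  obtain ⟨Z, v, w, hT⟩ := distinguished_cocone_triangle (adj.counit.app T)
  refine hD.mem₁_iff_mem₂ hT (hAD (rightOrth_leftOrth_subset hA hadm ?_))
  exact (isCoreflection_counit adj T).obj₃_mem_rightOrth
    (isShiftClosed_leftOrth hA.isShiftClosed) hT

lemma leftMutation_obj_mem_iff (hA : IsTriangulatedSub A) (hadm : RightAdmissible A)
    {L : C ⥤ ObjectProperty.FullSubcategory (fun X : C => X ∈ rightOrth A)}
    (adj : L ⊣ incl (rightOrth A)) (hD : IsTriangulatedSub D) (hAD : A ⊆ D) (T : C) :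
    (L.obj T).obj ∈ D ↔ T ∈ D := by
  obtain ⟨Z, v, w, hT⟩ := distinguished_cocone_triangle (adj.unit.app T)
  refine (hD.mem₁_iff_mem₂ hT (hAD (leftOrth_rightOrth_subset hA hadm ?_))).symm
  exact (isReflection_unit adj T).obj₃_mem_leftOrth
    (isShiftClosed_rightOrth hA.isShiftClosed) hT

end Pretriangulated

section Mutations

variable {C : Type u} [Category.{v} C] [HasZeroObject C] [Preadditive C] [HasShift C ℤ]
  [∀ n : ℤ, (shiftFunctor C n).Additive] [Pretriangulated C] {n : ℕ} {A : Fin n → Set C}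

lemma exists_isCoreflection_rightMutation (hA : ∀ i, IsTriangulatedSub (A i))
    (hadm : ∀ i, LeftAdmissible (A i)) (hso : IsSemiorthogonal A)
    {R : ∀ i, C ⥤ ObjectProperty.FullSubcategory (fun X : C => X ∈ leftOrth (A i))}
    (adjR : ∀ i, incl (leftOrth (A i)) ⊣ R i) :
    ∃ ε : composeAll (fun i => R i ⋙ incl (leftOrth (A i))) ⟶ 𝟭 C,
      ∀ T, IsCoreflection (leftOrth (triangulatedClosure (⋃ i, A i))) (ε.app T) := by
  rw [leftOrth_triangulatedClosure (isShiftClosed_iUnion fun i => (hA i).isShiftClosed),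
    leftOrth_iUnion]
  refine exists_isCoreflection_composeAll _ _ (fun i => (adjR i).counit)
    (fun i => isCoreflection_counit (adjR i)) fun i j hij X hX => ?_
  exact (rightMutation_obj_mem_iff (hA j) (hadm j) (adjR j)
    (isTriangulatedSub_leftOrth (hA i).isShiftClosed)
    (fun a ha b hb f => hso hij a ha b hb f) X).2 hX

lemma exists_isReflection_leftMutation (hA : ∀ i, IsTriangulatedSub (A i))
    (hadm : ∀ i, RightAdmissible (A i)) (hso : IsSemiorthogonal A)
    {L : ∀ i, C ⥤ ObjectProperty.FullSubcategory (fun X : C => X ∈ rightOrth (A i))}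
    (adjL : ∀ i, L i ⊣ incl (rightOrth (A i))) :
    ∃ η : 𝟭 C ⟶ composeAll (fun i => L i.rev ⋙ incl (rightOrth (A i.rev))),
      ∀ T, IsReflection (rightOrth (triangulatedClosure (⋃ i, A i))) (η.app T) := by
  rw [rightOrth_triangulatedClosure (isShiftClosed_iUnion fun i => (hA i).isShiftClosed),
    rightOrth_iUnion, ← Fin.rev_surjective.iInter_comp]
  refine exists_isReflection_composeAll _ _ (fun i => (adjL i.rev).unit)
    (fun i => isReflection_unit (adjL i.rev)) fun i j hij X hX => ?_
  exact (leftMutation_obj_mem_iff (hA j.rev) (hadm j.rev) (adjL j.rev)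
    (isTriangulatedSub_rightOrth (hA i.rev).isShiftClosed)
    (fun b hb a ha f => hso (Fin.rev_lt_rev.2 hij) a ha b hb f) X).2 hX

lemma rightOrth_leftOrth_triangulatedClosure (hA : ∀ i, IsTriangulatedSub (A i))
    (hadm : ∀ i, LeftAdmissible (A i)) (hso : IsSemiorthogonal A)
    {R : ∀ i, C ⥤ ObjectProperty.FullSubcategory (fun X : C => X ∈ leftOrth (A i))}
    (adjR : ∀ i, incl (leftOrth (A i)) ⊣ R i) :
    rightOrth (leftOrth (triangulatedClosure (⋃ i, A i))) = triangulatedClosure (⋃ i, A i) := by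
  refine Set.Subset.antisymm (fun y hy => ?_) (subset_rightOrth_leftOrth _)
  have hG := isTriangulatedSub_triangulatedClosure (⋃ i, A i)
  obtain ⟨ε, hε⟩ := exists_isCoreflection_rightMutation hA hadm hso adjR
  have hK := (hε y).isZero (hy _ (hε y).mem _)
  refine mem_of_composeAll_obj_mem _ (fun i X => ?_) (hG.zero _ hK)
  exact (rightMutation_obj_mem_iff (hA i) (hadm i) (adjR i) hG
    ((Set.subset_iUnion A i).trans (subset_triangulatedClosure _)) X).1

lemma leftOrth_rightOrth_triangulatedClosure (hA : ∀ i, IsTriangulatedSub (A i))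
    (hadm : ∀ i, RightAdmissible (A i)) (hso : IsSemiorthogonal A)
    {L : ∀ i, C ⥤ ObjectProperty.FullSubcategory (fun X : C => X ∈ rightOrth (A i))}
    (adjL : ∀ i, L i ⊣ incl (rightOrth (A i))) :
    leftOrth (rightOrth (triangulatedClosure (⋃ i, A i))) = triangulatedClosure (⋃ i, A i) := by
  refine Set.Subset.antisymm (fun y hy => ?_) (subset_leftOrth_rightOrth _)
  have hG := isTriangulatedSub_triangulatedClosure (⋃ i, A i)
  obtain ⟨η, hη⟩ := exists_isReflection_leftMutation hA hadm hso adjL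
  have hK := (hη y).isZero (hy _ (hη y).mem _)
  refine mem_of_composeAll_obj_mem _ (fun i X => ?_) (hG.zero _ hK)
  exact (leftMutation_obj_mem_iff (hA i.rev) (hadm i.rev) (adjL i.rev) hG
    ((Set.subset_iUnion A i.rev).trans (subset_triangulatedClosure _)) X).1

end Mutations

/-- If `A_1, …, A_n` is a semiorthogonal sequence of admissible subcategories of a triangulated
category `T`, then `⟨A_1, …, A_n⟩` is admissible, `R_{⟨A_1,…,A_n⟩} = R_{A_n} ∘ ⋯ ∘ R_{A_1}` and
`L_{⟨A_1,…,A_n⟩} = L_{A_1} ∘ ⋯ ∘ L_{A_n}`, where the mutation functors are encoded by the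
(given) adjoints of the inclusions of the corresponding orthogonal subcategories. -/
theorem statement_3 {C : Type u} [Category.{v} C] [HasZeroObject C] [Preadditive C]
    [HasShift C ℤ] [∀ n : ℤ, (shiftFunctor C n).Additive] [Pretriangulated C]
    {n : ℕ} (A : Fin n → Set C)
    (hA : ∀ i, IsTriangulatedSub (A i)) (hadm : ∀ i, Admissible (A i))
    (hso : IsSemiorthogonal A)
    (R : ∀ i : Fin n, C ⥤ ObjectProperty.FullSubcategory (fun X : C => X ∈ leftOrth (A i)))
    (adjR : ∀ i, incl (leftOrth (A i)) ⊣ R i)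
    (L : ∀ i : Fin n, C ⥤ ObjectProperty.FullSubcategory (fun X : C => X ∈ rightOrth (A i)))
    (adjL : ∀ i, L i ⊣ incl (rightOrth (A i)))
    (RG : C ⥤ ObjectProperty.FullSubcategory
      (fun X : C => X ∈ leftOrth (triangulatedClosure (⋃ i, A i))))
    (adjRG : incl (leftOrth (triangulatedClosure (⋃ i, A i))) ⊣ RG)
    (LG : C ⥤ ObjectProperty.FullSubcategory
      (fun X : C => X ∈ rightOrth (triangulatedClosure (⋃ i, A i))))
    (adjLG : LG ⊣ incl (rightOrth (triangulatedClosure (⋃ i, A i)))) :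
    Admissible (triangulatedClosure (⋃ i, A i)) ∧
    Nonempty ((RG ⋙ incl (leftOrth (triangulatedClosure (⋃ i, A i)))) ≅
      composeAll (fun i => R i ⋙ incl (leftOrth (A i)))) ∧
    Nonempty ((LG ⋙ incl (rightOrth (triangulatedClosure (⋃ i, A i)))) ≅
      composeAll (fun i => L i.rev ⋙ incl (rightOrth (A i.rev)))) := by
  have hG := (isTriangulatedSub_triangulatedClosure (⋃ i, A i)).isShiftClosed
  obtain ⟨ε, hε⟩ := exists_isCoreflection_rightMutation hA (fun i => (hadm i).2) hso adjR
  obtain ⟨η, hη⟩ := exists_isReflection_leftMutation hA (fun i => (hadm i).1) hso adjL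
  refine ⟨⟨?_, ?_⟩, ⟨isoOfIsCoreflection adjRG ε hε⟩, ⟨isoOfIsReflection adjLG η hη⟩⟩
  · rw [← leftOrth_rightOrth_triangulatedClosure hA (fun i => (hadm i).1) hso adjL]
    exact rightAdmissible_leftOrth (isShiftClosed_rightOrth hG) adjLG
  · rw [← rightOrth_leftOrth_triangulatedClosure hA (fun i => (hadm i).2) hso adjR]
    exact leftAdmissible_rightOrth (isShiftClosed_leftOrth hG) adjRG

end HPD
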